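/- arXiv:1603.08097 — 4 statements merged into one kernel-verified Lean document; each statement's English description precedes it below -/
import Mathlib

section
/- Theorem 2. Let λ be a nonzero real number and let j, k, p be natural numbers with j ≥ 1 and (4j−2)p + 2k ≥ 2j + 1. Then the series ∑_{r=p}^∞ arctan( λ·L_{2j−1}·F_{(4j−2)r+2k−1} / (F_{(4j−2)r+2k−1}² − F_{2j−1}² + λ²) ) converges and its sum equals arctan( λ / F_{(4j−2)p+2k−2j} ). -/
def lucas : ℕ → ℕ
  | 0 => 2
  | 1 => 1
  | n + 2 => lucas (n + 1) + lucas n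

/-!
With `d = 2j - 1` (odd) and `s = (4j - 2)p + 2k - 2j` (even, positive), the `r`-th summand is
`arctan (λ / F_{s+2dr}) - arctan (λ / F_{s+2d(r+1)})`, so the series telescopes to
`arctan (λ / F_s)`.
This comes from `arctan x - arctan y = arctan ((x - y) / (1 + xy))` together with two Fibonacci
identities valid for odd `d` and even `s`: `F_{s+2d} - F_s = L_d F_{s+d}` and Catalan's identity
`F_s F_{s+2d} = F_{s+d}^2 - F_d^2`. The telescoping sum converges unconditionally because
`λ / F_{s+2dr}` is monotone in `r` and tends to `0`.
-/

open Real Filter Topology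

-- At `n = 0` this reads `2 = Int.fib 1 + Int.fib (-1)`.
theorem lucas_eq_fib_add_one_add_fib_sub_one (n : ℕ) :
    (lucas n : ℤ) = Int.fib (n + 1) + Int.fib (n - 1) := by
  induction n using Nat.twoStepInduction with
  | zero => rfl
  | one => rfl
  | more n ih₁ ih₂ =>
    simp only [lucas, Nat.cast_add, ih₁, ih₂]
    push_cast
    grind [Int.fib_add_two]

theorem Int.fib_add_sub_fib_sub_of_odd (m : ℤ) {n : ℤ} (hn : Odd n) :
    fib (m + n) - fib (m - n) = fib m * (fib (n + 1) + fib (n - 1)) := by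
  have h₁ : fib (-n) = fib n := by rw [fib_neg, if_neg (Int.not_even_iff_odd.2 hn)]
  have h₂ : fib (-n + 1) = -fib (n - 1) := by
    rw [show -n + 1 = -(n - 1) by ring, fib_neg, if_pos (by simpa [Int.even_sub_one] using hn)]
  rw [sub_eq_add_neg m n, fib_add m n, fib_add m (-n), h₁, h₂]
  ring

theorem fib_add_two_mul_sub_fib_of_odd (s : ℕ) {d : ℕ} (hd : Odd d) :
    (Nat.fib (s + 2 * d) : ℤ) - Nat.fib s = lucas d * Nat.fib (s + d) := by
  have h := Int.fib_add_sub_fib_sub_of_odd ((s + d : ℕ) : ℤ) (n := d) (by exact_mod_cast hd)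
  rw [show ((s + d : ℕ) : ℤ) + d = ((s + 2 * d : ℕ) : ℤ) by push_cast; ring,
    show ((s + d : ℕ) : ℤ) - d = s by push_cast; ring] at h
  simp only [Int.fib_natCast] at h
  rw [lucas_eq_fib_add_one_add_fib_sub_one]
  linear_combination h

theorem fib_mul_fib_add_two_mul_of_even {s : ℕ} (hs : Even s) (d : ℕ) :
    (Nat.fib s : ℤ) * Nat.fib (s + 2 * d) = Nat.fib (s + d) ^ 2 - Nat.fib d ^ 2 := by
  have h := Int.fib_add_sq_sub_fib_mul_fib_add_two_mul s d
  rw [Int.natAbs_natCast, hs.neg_one_pow, one_mul,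
    show (s : ℤ) + d = ((s + d : ℕ) : ℤ) by push_cast; rfl,
    show (s : ℤ) + 2 * d = ((s + 2 * d : ℕ) : ℤ) by push_cast; rfl] at h
  simp only [Int.fib_natCast] at h
  linear_combination -h

theorem Nat.tendsto_fib_atTop : Tendsto Nat.fib atTop atTop :=
  tendsto_atTop_atTop.2 fun b => ⟨b + 1, fun n hn => by have := Nat.le_fib_add_one n; omega⟩

theorem arctan_div_sub_arctan_div (lam : ℝ) {a b : ℝ} (ha : 0 < a) (hb : 0 < b) :
    arctan (lam / a) - arctan (lam / b) = arctan (lam * (b - a) / (a * b + lam ^ 2)) := by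
  have hprod : lam / a * -(lam / b) < 1 := by
    have : 0 ≤ lam ^ 2 / (a * b) := by positivity
    linarith [show lam / a * -(lam / b) = -(lam ^ 2 / (a * b)) by ring]
  rw [sub_eq_add_neg, ← arctan_neg, arctan_add hprod]
  have : a * b + lam ^ 2 ≠ 0 := by positivity
  congr 1
  rw [div_eq_div_iff (by linarith) this]
  field_simp
  ring

theorem Antitone.hasSum_sub_succ {a : ℕ → ℝ} {l : ℝ} (ha : Antitone a)
    (hl : Tendsto a atTop (𝓝 l)) : HasSum (fun n => a n - a (n + 1)) (a 0 - l) := by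
  rw [hasSum_iff_tendsto_nat_of_nonneg fun n => sub_nonneg.2 (ha n.le_succ)]
  simpa only [Finset.sum_range_sub'] using tendsto_const_nhds.sub hl

theorem Monotone.hasSum_sub_succ {a : ℕ → ℝ} {l : ℝ} (ha : Monotone a)
    (hl : Tendsto a atTop (𝓝 l)) : HasSum (fun n => a n - a (n + 1)) (a 0 - l) := by
  simpa only [neg_sub_neg, neg_sub] using (ha.neg.hasSum_sub_succ hl.neg).neg

theorem hasSum_arctan_div_sub_arctan_div (lam : ℝ) {b : ℕ → ℝ} (hpos : ∀ n, 0 < b n)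
    (hmono : Monotone b) (hb : Tendsto b atTop atTop) :
    HasSum (fun n => arctan (lam / b n) - arctan (lam / b (n + 1))) (arctan (lam / b 0)) := by
  have hlim : Tendsto (fun n => arctan (lam / b n)) atTop (𝓝 0) := by
    simpa only [Function.comp_def, arctan_zero] using
      (continuous_arctan.tendsto 0).comp (tendsto_const_nhds.div_atTop hb)
  rw [← sub_zero (arctan (lam / b 0))]
  rcases le_or_gt 0 lam with hlam | hlam
  · refine Antitone.hasSum_sub_succ (fun m n hmn => arctan_strictMono.monotone ?_) hlim
    exact div_le_div_of_nonneg_left hlam (hpos m) (hmono hmn)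
  · refine Monotone.hasSum_sub_succ (fun m n hmn => arctan_strictMono.monotone ?_) hlim
    rw [div_le_div_iff₀ (hpos m) (hpos n)]
    nlinarith [hmono hmn]

theorem arctan_div_fib_sub_arctan_div_fib (lam : ℝ) {d s : ℕ} (hd : Odd d) (hs : Even s)
    (hs₀ : s ≠ 0) :
    arctan (lam / Nat.fib s) - arctan (lam / Nat.fib (s + 2 * d)) =
      arctan (lam * lucas d * Nat.fib (s + d) /
        ((Nat.fib (s + d) : ℝ) ^ 2 - (Nat.fib d : ℝ) ^ 2 + lam ^ 2)) := by
  have h₁ : (Nat.fib (s + 2 * d) : ℝ) - Nat.fib s = lucas d * Nat.fib (s + d) := by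
    exact_mod_cast fib_add_two_mul_sub_fib_of_odd s hd
  have h₂ : (Nat.fib s : ℝ) * Nat.fib (s + 2 * d) = Nat.fib (s + d) ^ 2 - Nat.fib d ^ 2 := by
    exact_mod_cast fib_mul_fib_add_two_mul_of_even hs d
  rw [arctan_div_sub_arctan_div lam (Nat.cast_pos.2 (Nat.fib_pos.2 (by omega)))
    (Nat.cast_pos.2 (Nat.fib_pos.2 (by omega))), h₁, h₂, mul_assoc]

theorem hasSum_arctan_lucas_mul_fib (lam : ℝ) {d s : ℕ} (hd : Odd d) (hs : Even s)
    (hs₀ : s ≠ 0) :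
    HasSum (fun r : ℕ => arctan (lam * lucas d * Nat.fib (s + 2 * d * r + d) /
        ((Nat.fib (s + 2 * d * r + d) : ℝ) ^ 2 - (Nat.fib d : ℝ) ^ 2 + lam ^ 2)))
      (arctan (lam / Nat.fib s)) := by
  have hterm (r : ℕ) := arctan_div_fib_sub_arctan_div_fib lam hd
    (hs.add ((even_two_mul d).mul_right r)) (by omega)
  have hsum := hasSum_arctan_div_sub_arctan_div lam (b := fun r => (Nat.fib (s + 2 * d * r) : ℝ))
    (fun r => Nat.cast_pos.2 (Nat.fib_pos.2 (by omega)))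
    (fun m n hmn => Nat.mono_cast (Nat.fib_mono (by gcongr)))
    (tendsto_natCast_atTop_atTop.comp <| Nat.tendsto_fib_atTop.comp <|
      tendsto_atTop_mono (fun r => show r ≤ s + 2 * d * r from
        le_add_left (Nat.le_mul_of_pos_left r (by linarith [hd.pos]))) tendsto_id)
  simpa only [mul_add_one, ← add_assoc, hterm, mul_zero, add_zero] using hsum

theorem theorem2_general (lam : ℝ) (j k p : ℕ) (hj : 1 ≤ j)
    (h : 2 * j + 1 ≤ (4 * j - 2) * p + 2 * k) :
    HasSum (fun r : ℕ =>
        Real.arctan (lam * (lucas (2 * j - 1) : ℝ) *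
            (Nat.fib ((4 * j - 2) * (p + r) + 2 * k - 1) : ℝ) /
          ((Nat.fib ((4 * j - 2) * (p + r) + 2 * k - 1) : ℝ) ^ 2
            - (Nat.fib (2 * j - 1) : ℝ) ^ 2 + lam ^ 2)))
      (Real.arctan (lam / (Nat.fib ((4 * j - 2) * p + 2 * k - 2 * j) : ℝ))) := by
  have hd : 2 * (2 * j - 1) = 4 * j - 2 := by omega
  have hsum := hasSum_arctan_lucas_mul_fib lam (d := 2 * j - 1)
    (s := (4 * j - 2) * p + 2 * k - 2 * j) (Nat.odd_iff.2 (by omega))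
    (by rw [← hd, mul_assoc, Nat.even_iff]; omega) (by omega)
  have hidx (r : ℕ) : (4 * j - 2) * p + 2 * k - 2 * j + 2 * (2 * j - 1) * r + (2 * j - 1) =
      (4 * j - 2) * (p + r) + 2 * k - 1 := by
    rw [hd, mul_add]; omega
  simpa only [hidx] using hsum

theorem theorem2 (lam : ℝ) (hlam : lam ≠ 0) (j k p : ℕ) (hj : 1 ≤ j)
    (h : 2 * j + 1 ≤ (4 * j - 2) * p + 2 * k) :
    HasSum (fun r : ℕ =>
        Real.arctan (lam * (lucas (2 * j - 1) : ℝ) *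
            (Nat.fib ((4 * j - 2) * (p + r) + 2 * k - 1) : ℝ) /
          ((Nat.fib ((4 * j - 2) * (p + r) + 2 * k - 1) : ℝ) ^ 2
            - (Nat.fib (2 * j - 1) : ℝ) ^ 2 + lam ^ 2)))
      (Real.arctan (lam / (Nat.fib ((4 * j - 2) * p + 2 * k - 2 * j) : ℝ))) :=
  theorem2_general lam j k p hj h
end

section
/- Theorem 4. Let λ be a real number and let j, k, p be natural numbers with j ≥ 1 and (4j−2)p + 2k + 1 ≥ 2j. Then the series ∑_{r=p}^∞ arctan( λ·L_{2j−1}·L_{(4j−2)r+2k} / (L_{(8j−4)r+4k} − L_{4j−2} + λ²) ) converges and its sum equals arctan( λ / L_{(4j−2)p+2k−2j+1} ). -/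
open Real Filter Topology goldenRatio

theorem lucas_pos (n : ℕ) : 0 < lucas n := by
  induction n using Nat.twoStepInduction with
  | zero => decide
  | one => decide
  | more n ih _ => exact Nat.add_pos_right _ ih

theorem le_lucas (n : ℕ) : n ≤ lucas n := by
  induction n using Nat.twoStepInduction with
  | zero => decide
  | one => decide
  | more n _ ih => have := lucas_pos n; simp only [lucas]; omega

theorem tendsto_lucas_atTop : Tendsto lucas atTop atTop :=
  tendsto_atTop_mono le_lucas tendsto_id

theorem lucas_eq_goldenRatio_pow_add (n : ℕ) : (lucas n : ℝ) = φ ^ n + ψ ^ n := by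
  induction n using Nat.twoStepInduction with
  | zero => norm_num [lucas]
  | one => simp [lucas, goldenRatio_add_goldenConj]
  | more n ih₁ ih₂ =>
    push_cast [lucas, ih₁, ih₂]
    rw [pow_add φ n 2, pow_add ψ n 2, goldenRatio_sq, goldenConj_sq]
    ring

theorem lucas_add_two_mul_of_odd (m : ℕ) {n : ℕ} (hn : Odd n) :
    (lucas (m + 2 * n) : ℝ) = lucas (m + n) * lucas n + lucas m := by
  have h : φ ^ n * ψ ^ n = -1 := by rw [← mul_pow, goldenRatio_mul_goldenConj, hn.neg_one_pow]
  simp only [lucas_eq_goldenRatio_pow_add]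
  linear_combination (-(φ ^ m + ψ ^ m)) * h

theorem lucas_add_two_mul_sub_lucas {s : ℕ} (hs : Odd s) (a : ℕ) :
    (lucas (a + 2 * s) : ℝ) - lucas a = lucas s * lucas (a + s) := by
  rw [lucas_add_two_mul_of_odd a hs]
  ring

theorem lucas_mul_lucas_add_two_mul (s : ℕ) {a : ℕ} (ha : Odd a) :
    (lucas a : ℝ) * lucas (a + 2 * s) = lucas (2 * (a + s)) - lucas (2 * s) := by
  rw [show 2 * (a + s) = 2 * s + 2 * a by ring, lucas_add_two_mul_of_odd _ ha,
    show 2 * s + a = a + 2 * s by ring]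
  ring

theorem arctan_div_sub_arctan_div_s4 {x y : ℝ} (hx : 0 < x) (hy : 0 < y) (c : ℝ) :
    arctan (c / x) - arctan (c / y) = arctan (c * (y - x) / (x * y + c ^ 2)) := by
  have h : c / x * -(c / y) < 1 := by
    have : 0 ≤ c / x * (c / y) := by rw [div_mul_div_comm, ← sq]; positivity
    linarith [neg_mul_eq_mul_neg (c / x) (c / y)]
  rw [sub_eq_add_neg, ← arctan_neg, arctan_add h]
  congr 1
  rw [div_eq_div_iff (by linarith) (by positivity)]
  field_simp
  ring

theorem hasSum_sub_succ_of_nonneg {f : ℕ → ℝ} {l : ℝ} (hf : ∀ n, 0 ≤ f n - f (n + 1))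
    (hl : Tendsto f atTop (𝓝 l)) : HasSum (fun n => f n - f (n + 1)) (f 0 - l) := by
  rw [hasSum_iff_tendsto_nat_of_nonneg hf]
  simpa only [Finset.sum_range_sub'] using tendsto_const_nhds.sub hl

theorem hasSum_arctan_lucas (lam : ℝ) {s : ℕ} (hs : Odd s) {a : ℕ → ℕ} (ha : Odd (a 0))
    (ha_succ : ∀ r, a (r + 1) = a r + 2 * s) :
    HasSum (fun r => arctan (lam * lucas s * lucas (a r + s) /
        (lucas (2 * (a r + s)) - lucas (2 * s) + lam ^ 2)))
      (arctan (lam / lucas (a 0))) := by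
  wlog hlam : 0 ≤ lam generalizing lam
  · simpa [neg_mul, neg_div, neg_sq, arctan_neg] using (this (-lam) (by linarith)).neg
  have h_odd (r : ℕ) : Odd (a r) := by
    induction r with
    | zero => exact ha
    | succ r ih => rw [ha_succ]; exact ih.add_even (even_two_mul s)
  have h_pos (n : ℕ) : (0 : ℝ) < lucas n := mod_cast lucas_pos n
  have h_term (r : ℕ) : arctan (lam * lucas s * lucas (a r + s) /
      (lucas (2 * (a r + s)) - lucas (2 * s) + lam ^ 2)) =
      arctan (lam / lucas (a r)) - arctan (lam / lucas (a (r + 1))) := by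
    rw [ha_succ, arctan_div_sub_arctan_div_s4 (h_pos _) (h_pos _), lucas_add_two_mul_sub_lucas hs,
      lucas_mul_lucas_add_two_mul s (h_odd r), mul_assoc]
  have h_nonneg (r : ℕ) :
      0 ≤ arctan (lam / lucas (a r)) - arctan (lam / lucas (a (r + 1))) := by
    rw [← h_term, arctan_nonneg, ← lucas_mul_lucas_add_two_mul s (h_odd r)]
    have := h_pos s
    positivity
  have h_tendsto_a : Tendsto a atTop atTop :=
    (strictMono_nat_of_lt_succ fun r => by rw [ha_succ]; have := hs.pos; omega).tendsto_atTop
  have h_lim : Tendsto (fun r => arctan (lam / lucas (a r))) atTop (𝓝 0) := by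
    rw [← arctan_zero]
    refine (continuous_arctan.tendsto 0).comp (tendsto_const_nhds.div_atTop ?_)
    exact tendsto_natCast_atTop_atTop.comp (tendsto_lucas_atTop.comp h_tendsto_a)
  simpa only [h_term, sub_zero] using hasSum_sub_succ_of_nonneg h_nonneg h_lim

theorem theorem4 (lam : ℝ) (j k p : ℕ) (hj : 1 ≤ j)
    (h : 2 * j ≤ (4 * j - 2) * p + 2 * k + 1) :
    HasSum (fun r : ℕ =>
        Real.arctan (lam * (lucas (2 * j - 1) : ℝ) *
            (lucas ((4 * j - 2) * (p + r) + 2 * k) : ℝ) /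
          ((lucas ((8 * j - 4) * (p + r) + 4 * k) : ℝ) - (lucas (4 * j - 2) : ℝ) + lam ^ 2)))
      (Real.arctan (lam / (lucas ((4 * j - 2) * p + 2 * k + 1 - 2 * j) : ℝ))) := by
  have hs : Odd (2 * j - 1) := Nat.odd_iff.mpr (by omega)
  have h_le (r : ℕ) : 2 * j ≤ (4 * j - 2) * (p + r) + 2 * k + 1 :=
    h.trans (by gcongr; omega)
  have h_even : (4 * j - 2) * p = 2 * ((2 * j - 1) * p) := by
    rw [← mul_assoc]; congr 1; omega
  have ha : Odd ((4 * j - 2) * p + 2 * k + 1 - 2 * j) := Nat.odd_iff.mpr (by omega)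
  have ha_succ (r : ℕ) : (4 * j - 2) * (p + (r + 1)) + 2 * k + 1 - 2 * j =
      (4 * j - 2) * (p + r) + 2 * k + 1 - 2 * j + 2 * (2 * j - 1) := by
    rw [← add_assoc, mul_add_one]; have := h_le r; omega
  convert hasSum_arctan_lucas (a := fun r => (4 * j - 2) * (p + r) + 2 * k + 1 - 2 * j)
    lam hs ha ha_succ using 1
  · funext r
    have := h_le r
    have h_double : (8 * j - 4) * (p + r) = 2 * ((4 * j - 2) * (p + r)) := by
      rw [← mul_assoc]; congr 1; omega
    rw [show lucas ((4 * j - 2) * (p + r) + 2 * k) =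
        lucas ((4 * j - 2) * (p + r) + 2 * k + 1 - 2 * j + (2 * j - 1)) by congr 1; omega,
      show lucas ((8 * j - 4) * (p + r) + 4 * k) =
        lucas (2 * ((4 * j - 2) * (p + r) + 2 * k + 1 - 2 * j + (2 * j - 1))) by congr 1; omega,
      show lucas (4 * j - 2) = lucas (2 * (2 * j - 1)) by congr 1; omega]
  · rfl
end

section
/- For every natural number j ≥ 1, the series ∑_{r=1}^∞ arctan( √5·F_{4j} / L_{4jr−2j} ) converges and its sum equals π/2. -/
/-
With `t = φ ^ (2j)`, Binet's formulas give `√5 F_{4j} = t² - t⁻²` and `L_{4jr-2j} = u + u⁻¹`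
for `u = t ^ (2r-1)`, and the subtraction formula for `arctan` turns the `r`-th term into
`arctan (t ^ (3-2r)) - arctan (t ^ (-1-2r))`. So the series telescopes with step two, to
`arctan t + arctan t⁻¹ = π / 2`.
-/

open Real Filter Topology
open scoped goldenRatio

theorem coe_lucas_eq : ∀ n : ℕ, (lucas n : ℝ) = φ ^ n + ψ ^ n
  | 0 => by norm_num [lucas]
  | 1 => by simp [lucas, goldenRatio_add_goldenConj]
  | n + 2 => by
    rw [lucas, Nat.cast_add, coe_lucas_eq (n + 1), coe_lucas_eq n]
    linear_combination (-φ ^ n) * goldenRatio_sq - ψ ^ n * goldenConj_sq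

theorem goldenConj_pow_two_mul (n : ℕ) : ψ ^ (2 * n) = (φ ^ (2 * n))⁻¹ := by
  refine eq_inv_of_mul_eq_one_left ?_
  rw [← mul_pow, goldenConj_mul_goldenRatio, pow_mul]
  norm_num

theorem coe_lucas_two_mul (n : ℕ) :
    (lucas (2 * n) : ℝ) = φ ^ (2 * n) + (φ ^ (2 * n))⁻¹ := by
  rw [coe_lucas_eq, goldenConj_pow_two_mul]

theorem sqrt_five_mul_fib_two_mul (n : ℕ) :
    √5 * (Nat.fib (2 * n) : ℝ) = φ ^ (2 * n) - (φ ^ (2 * n))⁻¹ := by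
  rw [coe_fib_eq, goldenConj_pow_two_mul, mul_div_cancel₀ _ (by positivity)]

theorem arctan_sub_arctan {x y : ℝ} (hx : 0 ≤ x) (hy : 0 ≤ y) :
    arctan x - arctan y = arctan ((x - y) / (1 + x * y)) := by
  rw [sub_eq_add_neg, ← arctan_neg, arctan_add (by nlinarith)]
  ring_nf

theorem arctan_sub_inv_div_add_inv {s u : ℝ} (hs : 0 < s) (hu : 0 < u) :
    arctan ((s - s⁻¹) / (u + u⁻¹)) = arctan (s / u) - arctan (s * u)⁻¹ := by
  rw [arctan_sub_arctan (by positivity) (by positivity)]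
  congr 1
  field_simp

theorem hasSum_sub_add_two_of_antitone {b : ℕ → ℝ} (hb : Antitone b)
    (hlim : Tendsto b atTop (𝓝 0)) : HasSum (fun r => b r - b (r + 2)) (b 0 + b 1) := by
  have hsum (n : ℕ) :
      ∑ r ∈ Finset.range n, (b r - b (r + 2)) = b 0 + b 1 - (b n + b (n + 1)) := by
    induction n with
    | zero => simp
    | succ n ih => rw [Finset.sum_range_succ, ih]; ring
  rw [hasSum_iff_tendsto_nat_of_nonneg (fun r => sub_nonneg.2 (hb (by omega))), funext hsum]
  simpa using tendsto_const_nhds.sub (hlim.add (hlim.comp (tendsto_add_atTop_nat 1)))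

theorem hasSum_arctan_sq_sub_inv_div_odd_pow_add_inv {t : ℝ} (ht : 1 < t) :
    HasSum (fun r : ℕ =>
        arctan ((t ^ 2 - (t ^ 2)⁻¹) / (t ^ (2 * r + 1) + (t ^ (2 * r + 1))⁻¹))) (π / 2) := by
  have ht0 : 0 < t := by linarith
  set b : ℕ → ℝ := fun k => arctan (t / (t ^ 2) ^ k) with hb
  have hterm (r : ℕ) :
      arctan ((t ^ 2 - (t ^ 2)⁻¹) / (t ^ (2 * r + 1) + (t ^ (2 * r + 1))⁻¹)) =
        b r - b (r + 2) := by
    rw [arctan_sub_inv_div_add_inv (by positivity) (by positivity)]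
    congr 2 <;> field_simp <;> ring
  have hanti : Antitone b := fun m n hmn =>
    arctan_strictMono.monotone <| div_le_div_of_nonneg_left ht0.le (by positivity) <|
      pow_le_pow_right₀ (by nlinarith) hmn
  have hlim : Tendsto b atTop (𝓝 0) := by
    have hq : 1 < t ^ 2 := by nlinarith
    have := (continuous_arctan.tendsto 0).comp <|
      (tendsto_const_nhds (x := t)).div_atTop (tendsto_pow_atTop_atTop_of_one_lt hq)
    rwa [arctan_zero] at this
  have hb01 : b 0 + b 1 = π / 2 := by
    have h1 : t / (t ^ 2) ^ 1 = t⁻¹ := by field_simp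
    simp only [hb, pow_zero, div_one, h1, arctan_inv_of_pos ht0]
    ring
  simpa only [hterm, hb01] using hasSum_sub_add_two_of_antitone hanti hlim

theorem stmt12 (j : ℕ) (hj : 1 ≤ j) :
    HasSum (fun r : ℕ =>
        Real.arctan (Real.sqrt 5 * (Nat.fib (4 * j) : ℝ) /
          (lucas (4 * j * (1 + r) - 2 * j) : ℝ)))
      (Real.pi / 2) := by
  set t := φ ^ (2 * j)
  have ht : 1 < t := one_lt_pow₀ one_lt_goldenRatio (by omega)
  have hnum : √5 * (Nat.fib (4 * j) : ℝ) = t ^ 2 - (t ^ 2)⁻¹ := by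
    rw [show 4 * j = 2 * (2 * j) by ring, sqrt_five_mul_fib_two_mul, pow_mul']
  have hden (r : ℕ) :
      (lucas (4 * j * (1 + r) - 2 * j) : ℝ) = t ^ (2 * r + 1) + (t ^ (2 * r + 1))⁻¹ := by
    rw [show 4 * j * (1 + r) - 2 * j = 2 * (j * (2 * r + 1)) from
      Nat.sub_eq_of_eq_add (by ring), coe_lucas_two_mul, ← mul_assoc, pow_mul]
  simpa only [hnum, hden] using hasSum_arctan_sq_sub_inv_div_odd_pow_add_inv ht
end

section
/- For every natural number p ≥ 1, the series ∑_{r=p}^∞ arctan( (1/5)·L_{2r} / F_{2r}² ) converges and its sum equals arctan( 1 / L_{2p−1} ). (In particular, taking p = 1 gives ∑_{r=1}^∞ arctan( L_{2r} / (5·F_{2r}²) ) = π/4.) -/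
open Filter Topology

theorem Real.arctan_one_div_sub_arctan_one_div {a b : ℝ} (hab : 0 < a * b) :
    arctan (1 / a) - arctan (1 / b) = arctan ((b - a) / (a * b + 1)) := by
  have hlt : 1 / a * -(1 / b) < 1 := by
    rw [mul_neg, one_div_mul_one_div]
    linarith [one_div_pos.2 hab]
  rw [sub_eq_add_neg, ← arctan_neg, arctan_add hlt]
  congr 1
  have ha : a ≠ 0 := left_ne_zero_of_mul hab.ne'
  have hb : b ≠ 0 := right_ne_zero_of_mul hab.ne'
  have hden : a * b + 1 ≠ 0 := by positivity
  rw [div_eq_div_iff (sub_pos.2 hlt).ne' hden]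
  field_simp
  ring

theorem hasSum_of_eq_sub_succ_of_nonneg {f g : ℕ → ℝ} {l : ℝ} (hf : ∀ n, 0 ≤ f n)
    (hfg : ∀ n, f n = g n - g (n + 1)) (hg : Tendsto g atTop (𝓝 l)) :
    HasSum f (g 0 - l) := by
  rw [hasSum_iff_tendsto_nat_of_nonneg hf]
  have hpartial : ∀ n, ∑ i ∈ Finset.range n, f i = g 0 - g n := fun n => by
    rw [Finset.sum_congr rfl fun i _ => hfg i, Finset.sum_range_sub']
  simpa only [hpartial] using hg.const_sub (g 0)

namespace lucas

theorem add_two (n : ℕ) : lucas (n + 2) = lucas (n + 1) + lucas n := rfl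

theorem pos (n : ℕ) : 0 < lucas n := by
  induction n using Nat.twoStepInduction with
  | zero => decide
  | one => decide
  | more n _ ih => rw [add_two]; omega

theorem self_le (n : ℕ) : n ≤ lucas n := by
  induction n using Nat.twoStepInduction with
  | zero => decide
  | one => decide
  | more n _ ih => have := pos n; rw [add_two]; omega

theorem tendsto_atTop : Tendsto lucas atTop atTop :=
  tendsto_atTop_mono self_le tendsto_id

theorem cast_eq_two_mul_fib_succ_sub_fib (n : ℕ) :
    (lucas n : ℤ) = 2 * Nat.fib (n + 1) - Nat.fib n := by
  induction n using Nat.twoStepInduction with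
  | zero => decide
  | one => decide
  | more n ih₀ ih₁ =>
    rw [add_two, Nat.fib_add_two (n := n + 1), Nat.fib_add_two (n := n)]
    rw [Nat.fib_add_two] at ih₁
    push_cast at *
    linarith

theorem mul_add_two (n : ℕ) :
    (lucas n * lucas (n + 2) : ℤ) = 5 * (Nat.fib (n + 1) : ℤ) ^ 2 + (-1) ^ n := by
  have cassini := Int.fib_succ_mul_fib_pred_sub_fib_sq (n + 1)
  simp only [add_sub_cancel_right] at cassini
  norm_cast at cassini
  simp only [Int.fib_natCast] at cassini
  rw [cast_eq_two_mul_fib_succ_sub_fib, cast_eq_two_mul_fib_succ_sub_fib,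
    Nat.fib_add_two (n := n + 1), Nat.fib_add_two (n := n)]
  rw [Nat.fib_add_two] at cassini
  push_cast at *
  linear_combination (-1 : ℤ) * cassini

end lucas

theorem arctan_lucas_div_fib_sq {n : ℕ} (hn : Odd n) :
    Real.arctan ((1 / 5) * (lucas (n + 1) : ℝ) / (Nat.fib (n + 1) : ℝ) ^ 2)
      = Real.arctan (1 / (lucas n : ℝ)) - Real.arctan (1 / (lucas (n + 2) : ℝ)) := by
  have hprod : (lucas n * lucas (n + 2) : ℝ) = 5 * (Nat.fib (n + 1) : ℝ) ^ 2 - 1 := by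
    have := congrArg (Int.cast : ℤ → ℝ) (lucas.mul_add_two n)
    push_cast [hn.neg_one_pow] at this
    linarith
  have hdiff : (lucas (n + 2) - lucas n : ℝ) = lucas (n + 1) := by
    rw [lucas.add_two]; push_cast; ring
  have hpos : (0 : ℝ) < lucas n * lucas (n + 2) := by
    have := lucas.pos n; have := lucas.pos (n + 2); positivity
  rw [Real.arctan_one_div_sub_arctan_one_div hpos, hdiff, hprod]
  congr 1
  ring

theorem stmt19 (p : ℕ) (hp : 1 ≤ p) :
    HasSum (fun r : ℕ =>
        Real.arctan ((1 / 5) * (lucas (2 * (p + r)) : ℝ) /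
          (Nat.fib (2 * (p + r)) : ℝ) ^ 2))
      (Real.arctan (1 / (lucas (2 * p - 1) : ℝ))) := by
  set g : ℕ → ℝ := fun r => Real.arctan (1 / (lucas (2 * (p + r) - 1) : ℝ))
  have hterm : ∀ r, Real.arctan ((1 / 5) * (lucas (2 * (p + r)) : ℝ) /
      (Nat.fib (2 * (p + r)) : ℝ) ^ 2) = g r - g (r + 1) := fun r => by
    have h := arctan_lucas_div_fib_sq (n := 2 * (p + r) - 1) ⟨p + r - 1, by omega⟩
    rwa [show 2 * (p + r) - 1 + 1 = 2 * (p + r) by omega,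
      show 2 * (p + r) - 1 + 2 = 2 * (p + (r + 1)) - 1 by omega] at h
  have hnonneg : ∀ r, 0 ≤ Real.arctan ((1 / 5) * (lucas (2 * (p + r)) : ℝ) /
      (Nat.fib (2 * (p + r)) : ℝ) ^ 2) := fun r => Real.arctan_nonneg.2 (by positivity)
  have hg : Tendsto g atTop (𝓝 0) := by
    have hidx : Tendsto (fun r => 2 * (p + r) - 1) atTop atTop :=
      tendsto_atTop_mono (fun r => show r ≤ _ by omega) tendsto_id
    have hinv := tendsto_inv_atTop_zero.comp
      (tendsto_natCast_atTop_atTop (R := ℝ) |>.comp (lucas.tendsto_atTop.comp hidx))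
    simpa [g, Function.comp_def] using (Real.continuous_arctan.tendsto 0).comp hinv
  simpa [g] using hasSum_of_eq_sub_succ_of_nonneg hnonneg hterm hg
end
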